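/- arXiv:2510.07921 — 2 statements merged into one kernel-verified Lean document; each statement's English description precedes it below -/
import Mathlib

section
/- (Mixed conditioning lemma) Let (Ω, 𝒜, P) be a probability space, (H_i)_{i∈I} a countable measurable partition of Ω, ℱ ⊆ 𝒜 a sub-σ-algebra, and ℋ = σ(H_i : i ∈ I). Then for any integrable real random variable X, on each event H_i where P(H_i | ℱ) > 0 a.s., the conditional expectation satisfies E[X | ℱ ∨ ℋ] = E[X·1_{H_i} | ℱ] / P(H_i | ℱ) almost surely. -/
open MeasureTheory

/-- Every set in `m ⊔ σ(H)` agrees with an `m`-measurable set on `H i`. -/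
lemma inter_eq_of_mem_sup {Ω : Type*} {I : Type*} (m : MeasurableSpace Ω)
    (H : I → Set Ω) (i : I) (hdisj : Pairwise (Function.onFun Disjoint H)) :
    ∀ s, MeasurableSet[m ⊔ MeasurableSpace.generateFrom (Set.range H)] s →
      ∃ B, MeasurableSet[m] B ∧ s ∩ H i = B ∩ H i := by
  let mB : MeasurableSpace Ω :=
    { MeasurableSet' := fun s => ∃ B, MeasurableSet[m] B ∧ s ∩ H i = B ∩ H i
      measurableSet_empty := ⟨∅, @MeasurableSet.empty Ω m, rfl⟩
      measurableSet_compl := by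
        rintro s ⟨B, hB, hBe⟩
        refine ⟨Bᶜ, hB.compl, ?_⟩
        ext ω
        have h := Set.ext_iff.mp hBe ω
        simp only [Set.mem_inter_iff] at h ⊢
        simp only [Set.mem_compl_iff]
        tauto
      measurableSet_iUnion := by
        intro f hf
        choose B hB hBe using hf
        refine ⟨⋃ n, B n, MeasurableSet.iUnion hB, ?_⟩
        rw [Set.iUnion_inter, Set.iUnion_inter]
        exact Set.iUnion_congr hBe }
  have hle : m ⊔ MeasurableSpace.generateFrom (Set.range H) ≤ mB := by
    refine sup_le (fun s hs => ⟨s, hs, rfl⟩) (MeasurableSpace.generateFrom_le ?_)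
    rintro s ⟨j, rfl⟩
    by_cases hj : j = i
    · subst hj
      exact ⟨Set.univ, (MeasurableSet.univ : MeasurableSet[m] _), by simp⟩
    · refine ⟨∅, @MeasurableSet.empty Ω m, ?_⟩
      have hd : Disjoint (H j) (H i) := hdisj hj
      simp [Set.disjoint_iff_inter_eq_empty.mp hd]
  exact fun s hs => hle s hs

/-- Mixed conditioning lemma: for a countable measurable partition `(H i)` of `Ω`
generating `ℋ`, a sub-σ-algebra `ℱ = m`, and an integrable `X`, on each `H i`
where `P(H i ∣ ℱ) > 0` a.s. one has
`E[X ∣ ℱ ∨ ℋ] = E[X · 1_{H i} ∣ ℱ] / P(H i ∣ ℱ)` almost surely. -/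
theorem mixed_conditioning {Ω : Type*} (m : MeasurableSpace Ω) {m0 : MeasurableSpace Ω}
    (μ : Measure Ω) [IsProbabilityMeasure μ]
    (hm : m ≤ m0)
    {I : Type*} [Countable I] (H : I → Set Ω)
    (hHmeas : ∀ i, MeasurableSet (H i))
    (hdisj : Pairwise (Function.onFun Disjoint H))
    (hcover : (⋃ i, H i) = Set.univ)
    (hgen : MeasurableSpace.generateFrom (Set.range H) ≤ m0)
    (X : Ω → ℝ) (hX : Integrable X μ) (i : I)
    (hpos : ∀ᵐ ω ∂μ, 0 < (μ[(H i).indicator (fun _ => (1 : ℝ)) | m]) ω) :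
    ∀ᵐ ω ∂μ, ω ∈ H i →
      (μ[X | m ⊔ MeasurableSpace.generateFrom (Set.range H)]) ω
        = (μ[(H i).indicator X | m]) ω
            / (μ[(H i).indicator (fun _ => (1 : ℝ)) | m]) ω := by
  letI : MeasurableSpace Ω := m0
  have hm' : m ⊔ MeasurableSpace.generateFrom (Set.range H) ≤ m0 := sup_le hm hgen
  have hHi' : MeasurableSet[m ⊔ MeasurableSpace.generateFrom (Set.range H)] (H i) :=
    (le_sup_right : MeasurableSpace.generateFrom (Set.range H) ≤ _) _
      (MeasurableSpace.measurableSet_generateFrom ⟨i, rfl⟩)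
  set Y : Ω → ℝ := μ[X | m ⊔ MeasurableSpace.generateFrom (Set.range H)] with hYdef
  set g1 : Ω → ℝ := μ[(H i).indicator X | m] with hg1def
  set g2 : Ω → ℝ := μ[(H i).indicator (fun _ => (1 : ℝ)) | m] with hg2def
  -- basic integrability facts
  have hH0 : ∀ j, MeasurableSet[m0] (H j) := fun j => hHmeas j
  have hXi : Integrable ((H i).indicator X) μ := hX.indicator (hH0 i)
  have hInd1 : Integrable ((H i).indicator (fun _ => (1 : ℝ))) μ :=
    (integrable_const (1 : ℝ)).indicator (hH0 i)
  have hYint : Integrable Y μ := integrable_condExp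
  have hYi : Integrable ((H i).indicator Y) μ := hYint.indicator (hH0 i)
  have hg1int : Integrable g1 μ := integrable_condExp
  have hg2sm : StronglyMeasurable[m] g2 := stronglyMeasurable_condExp
  have hg1sm : StronglyMeasurable[m] g1 := stronglyMeasurable_condExp
  have hYsm : StronglyMeasurable[m ⊔ MeasurableSpace.generateFrom (Set.range H)] Y :=
    stronglyMeasurable_condExp
  -- g2 is a.e. bounded by 1 in norm
  have hg2nonneg : 0 ≤ᵐ[μ] g2 :=
    condExp_nonneg (ae_of_all _ fun ω => Set.indicator_nonneg (fun _ _ => zero_le_one) ω)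
  have hg2le1 : ∀ᵐ ω ∂μ, g2 ω ≤ 1 := by
    have h1 : g2 ≤ᵐ[μ] μ[(fun _ => (1 : ℝ)) | m] :=
      condExp_mono hInd1 (integrable_const (1 : ℝ))
        (ae_of_all _ fun ω => Set.indicator_le_self' (fun _ _ => zero_le_one) ω)
    rw [condExp_const hm (1 : ℝ)] at h1
    exact h1
  have hg2bdd : ∀ᵐ ω ∂μ, ‖g2 ω‖ ≤ 1 := by
    filter_upwards [hg2nonneg, hg2le1] with ω h0 h1
    rw [Real.norm_eq_abs, abs_of_nonneg h0]; exact h1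
  -- the two functions to compare
  set F : Ω → ℝ := fun ω => g2 ω * (H i).indicator Y ω with hFdef
  set G : Ω → ℝ := fun ω => g1 ω * (H i).indicator (fun _ => (1 : ℝ)) ω with hGdef
  have hF_int : Integrable F μ :=
    hYi.bdd_mul ((hg2sm.mono hm).aestronglyMeasurable) hg2bdd
  have hG_int : Integrable G μ := by
    have h : Integrable (fun ω => (H i).indicator (fun _ => (1 : ℝ)) ω * g1 ω) μ := by
      refine hg1int.bdd_mul (c := 1)
        (((stronglyMeasurable_const (b := (1 : ℝ))).indicator
          (hHmeas i)).aestronglyMeasurable) (ae_of_all _ fun ω => ?_)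
      by_cases hω : ω ∈ H i <;>
        simp [Set.indicator_of_mem, Set.indicator_of_notMem, hω]
    exact h.congr (ae_of_all _ fun ω => mul_comm _ _)
  -- indicator forms of F and G
  have hFind : F = (H i).indicator (fun ω => g2 ω * Y ω) := by
    ext ω
    by_cases hω : ω ∈ H i <;>
      simp [hFdef, Set.indicator_of_mem, Set.indicator_of_notMem, hω]
  have hGind : G = (H i).indicator g1 := by
    ext ω
    by_cases hω : ω ∈ H i <;>
      simp [hGdef, Set.indicator_of_mem, Set.indicator_of_notMem, hω]
  -- conditional expectation computations with respect to m
  have hind_tower : μ[(H i).indicator Y | m] =ᵐ[μ] g1 := by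
    have h1 : (H i).indicator Y
        =ᵐ[μ] μ[(H i).indicator X | m ⊔ MeasurableSpace.generateFrom (Set.range H)] :=
      (condExp_indicator hX hHi').symm
    calc μ[(H i).indicator Y | m]
        =ᵐ[μ] μ[μ[(H i).indicator X | m ⊔ MeasurableSpace.generateFrom (Set.range H)] | m] :=
          condExp_congr_ae h1
      _ =ᵐ[μ] g1 := condExp_condExp_of_le le_sup_left hm'
  have hFc : μ[F | m] =ᵐ[μ] fun ω => g2 ω * g1 ω := by
    have hpull : μ[g2 * (H i).indicator Y | m] =ᵐ[μ] g2 * μ[(H i).indicator Y | m] :=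
      condExp_mul_of_stronglyMeasurable_left hg2sm (by exact hF_int) hYi
    refine hpull.trans ?_
    filter_upwards [hind_tower] with ω hω
    simp only [Pi.mul_apply, hω]
  have hGc : μ[G | m] =ᵐ[μ] fun ω => g2 ω * g1 ω := by
    have hpull : μ[g1 * (H i).indicator (fun _ => (1 : ℝ)) | m]
        =ᵐ[μ] g1 * μ[(H i).indicator (fun _ => (1 : ℝ)) | m] :=
      condExp_mul_of_stronglyMeasurable_left hg1sm (by exact hG_int) hInd1
    refine hpull.trans ?_
    exact ae_of_all _ fun ω => mul_comm _ _
  -- main claim: F =ᵐ G, via equality of integrals on all (m ⊔ σ(H))-measurable sets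
  haveI : SigmaFinite (μ.trim hm') := by infer_instance
  have hmain : F =ᵐ[μ] G := by
    refine ae_eq_of_forall_setIntegral_eq_of_sigmaFinite' hm'
      (fun s _ _ => hF_int.integrableOn) (fun s _ _ => hG_int.integrableOn) ?_ ?_ ?_
    · intro s hs _
      obtain ⟨B, hB, hBe⟩ := inter_eq_of_mem_sup m H i hdisj s hs
      have hsF : ∫ ω in s, F ω ∂μ = ∫ ω in B, F ω ∂μ := by
        rw [hFind, setIntegral_indicator (hH0 i), setIntegral_indicator (hH0 i), hBe]
      have hsG : ∫ ω in s, G ω ∂μ = ∫ ω in B, G ω ∂μ := by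
        rw [hGind, setIntegral_indicator (hH0 i), setIntegral_indicator (hH0 i), hBe]
      rw [hsF, hsG, ← setIntegral_condExp hm hF_int hB, ← setIntegral_condExp hm hG_int hB]
      exact integral_congr_ae (ae_restrict_of_ae (hFc.trans hGc.symm))
    · exact ((hg2sm.mono (le_sup_left (b := MeasurableSpace.generateFrom (Set.range H)))).mul (hYsm.indicator hHi')).aestronglyMeasurable
    · exact ((hg1sm.mono le_sup_left).mul
        ((stronglyMeasurable_const (b := (1 : ℝ))).indicator hHi')).aestronglyMeasurable
  -- conclude pointwise on H i
  filter_upwards [hmain, hpos] with ω hω hpω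
  intro hmem
  have hFG : g2 ω * Y ω = g1 ω := by
    simpa [hFdef, hGdef, Set.indicator_of_mem hmem] using hω
  rw [eq_div_iff hpω.ne', mul_comm]
  exact hFG
end

section
/- (Grönwall-type uniqueness) Let ξ be a locally finite Borel measure on [0,∞), and let δ : [0,t] → [0,∞) be a bounded measurable function satisfying δ(u) ≤ K ∫_{[0,u)} δ dξ for all u ∈ [0,t], for some constant K ≥ 0. Then δ ≡ 0 on [0,t]. -/
/-!
Let `s` be the supremum of the points `x ≤ t` such that `δ` vanishes on `[0, x)`. That set is
closed, so `δ` vanishes on `[0, s)`, and then at `s` by the inequality. For `u` slightly to the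
right of `s` the inequality only sees `ξ` on the open interval `(s, u)`, so an atom of `ξ` at `s`
is invisible, and by continuity of `ξ` from above `K ξ (s, s + ε] ≤ 1/2` for small `ε`. Hence
every bound `B` of `δ` on `(s, s + ε]` improves to `B / 2`, so `δ` vanishes there too, which
contradicts the maximality of `s` unless `s = t`.
-/

open MeasureTheory Set Filter Topology

theorem isClosed_setOf_Ico_subset {α : Type*} [LinearOrder α] [TopologicalSpace α]
    [OrderClosedTopology α] (a : α) (Z : Set α) : IsClosed {x | Ico a x ⊆ Z} := by
  have : {x | Ico a x ⊆ Z} = ⋂ v ∈ Ici a \ Z, Iic v := by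
    ext x
    simp only [mem_ofPred_eq, subset_def, mem_Ico, mem_iInter, Set.mem_sdiff, mem_Ici, mem_Iic]
    exact forall_congr' fun v => by rw [← not_lt (a := v) (b := x)]; tauto
  exact this ▸ isClosed_biInter fun v _ => isClosed_Iic

theorem Ico_subset_of_forall_exists_gt_Ico_subset {α : Type*}
    [ConditionallyCompleteLinearOrder α] [TopologicalSpace α] [OrderTopology α] {a b : α}
    {Z : Set α} (h : ∀ x ∈ Ico a b, Ico a x ⊆ Z → ∃ y > x, Ico a y ⊆ Z) : Ico a b ⊆ Z := by
  rcases le_or_gt a b with hab | hba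
  · refine (isClosed_setOf_Ico_subset a Z).inter isClosed_Icc |>.mem_of_ge_of_forall_exists_gt
      (by simp) hab fun x ⟨hxZ, hx⟩ => ?_
    obtain ⟨y, hxy, hyZ⟩ := h x hx hxZ
    exact ⟨min y b, (Ico_subset_Ico_right (min_le_left y b)).trans hyZ, lt_min hxy hx.2,
      min_le_right y b⟩
  · simp [Ico_eq_empty_of_le hba.le]

theorem tendsto_measure_Ioc_nhdsGT (μ : Measure ℝ) [IsFiniteMeasureOnCompacts μ] (a : ℝ) :
    Tendsto (fun b ↦ μ (Ioc a b)) (𝓝[>] a) (𝓝 0) := by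
  have hempty : ⋂ b > a, Ioc a b = ∅ :=
    eq_empty_of_forall_notMem fun x hx => by
      have hax : a < x := (mem_iInter₂.1 hx (a + 1) (by linarith)).1
      have := (mem_iInter₂.1 hx ((a + x) / 2) (by linarith)).2
      linarith
  have hfin : μ (Ioc a (a + 1)) ≠ ⊤ :=
    ((measure_mono Ioc_subset_Icc_self).trans_lt isCompact_Icc.measure_lt_top).ne
  have := tendsto_measure_biInter_gt (μ := μ) (s := Ioc a) (fun b _ ↦ nullMeasurableSet_Ioc)
    (fun b c _ hbc ↦ Ioc_subset_Ioc_right hbc) ⟨a + 1, by linarith, hfin⟩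
  rwa [hempty, measure_empty] at this

theorem nonpos_of_forall_le_imp_le_half {ι : Type*} {f : ι → ℝ} {B : ℝ} (hB : ∀ i, f i ≤ B)
    (hhalf : ∀ B', (∀ i, f i ≤ B') → ∀ i, f i ≤ B' / 2) (i : ι) : f i ≤ 0 := by
  have hpow (n : ℕ) : ∀ i, f i ≤ B / 2 ^ n := by
    induction n with
    | zero => simpa using hB
    | succ n ih => simpa [pow_succ, div_div] using hhalf _ ih
  have hlim : Tendsto (fun n : ℕ => B / 2 ^ n) atTop (𝓝 0) :=
    tendsto_const_nhds.div_atTop (tendsto_pow_atTop_atTop_of_one_lt one_lt_two)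
  exact ge_of_tendsto' hlim fun n => hpow n i

theorem exists_eqOn_zero_Ioc_of_le_mul_setIntegral_Ioo (μ : Measure ℝ)
    [IsFiniteMeasureOnCompacts μ] {f : ℝ → ℝ} {K B s b : ℝ} (hK : 0 ≤ K) (hsb : s < b)
    (hf0 : ∀ u ∈ Ioc s b, 0 ≤ f u) (hfB : ∀ u ∈ Ioc s b, f u ≤ B)
    (hf : ∀ u ∈ Ioc s b, f u ≤ K * ∫ x in Ioo s u, f x ∂μ) :
    ∃ c > s, EqOn f 0 (Ioc s c) := by
  have hsmall : ∀ᶠ c in 𝓝[>] s, c ∈ Ioc s b ∧ K * μ.real (Ioc s c) < 1 / 2 := by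
    refine Eventually.and (Ioc_mem_nhdsGT hsb) ?_
    have := ((ENNReal.tendsto_toReal ENNReal.zero_ne_top).comp
      (tendsto_measure_Ioc_nhdsGT μ s)).const_mul K
    simp only [ENNReal.toReal_zero, mul_zero] at this
    exact this.eventually_lt_const one_half_pos
  obtain ⟨c, ⟨hsc, hcb⟩, hc⟩ := hsmall.exists
  have hsub : Ioc s c ⊆ Ioc s b := Ioc_subset_Ioc_right hcb
  have hfin : μ (Ioc s c) ≠ ⊤ :=
    ((measure_mono Ioc_subset_Icc_self).trans_lt isCompact_Icc.measure_lt_top).ne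
  have hhalf (B' : ℝ) (hB' : ∀ u : Ioc s c, f u ≤ B') (u : Ioc s c) : f u ≤ B' / 2 := by
    have hB'0 : 0 ≤ B' := (hf0 u (hsub u.2)).trans (hB' u)
    have hsubu : Ioo s u ⊆ Ioc s c := Ioo_subset_Ioc_self.trans (Ioc_subset_Ioc_right u.2.2)
    have hint : ∫ x in Ioo s u, f x ∂μ ≤ B' * μ.real (Ioo s u) :=
      (le_abs_self _).trans <| norm_setIntegral_le_of_norm_le_const
        ((measure_mono hsubu).trans_lt hfin.lt_top) fun x hx => by
          rw [Real.norm_of_nonneg (hf0 x (hsub (hsubu hx)))]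
          exact hB' ⟨x, hsubu hx⟩
    calc f u ≤ K * ∫ x in Ioo s u, f x ∂μ := hf u (hsub u.2)
      _ ≤ K * (B' * μ.real (Ioc s c)) := by
          gcongr
          exact hint.trans (by gcongr)
      _ = B' * (K * μ.real (Ioc s c)) := by ring
      _ ≤ B' * (1 / 2) := by gcongr
      _ = B' / 2 := by ring
  refine ⟨c, hsc, fun u hu => le_antisymm ?_ (hf0 u (hsub hu))⟩
  exact nonpos_of_forall_le_imp_le_half (fun v : Ioc s c => hfB v (hsub v.2)) hhalf ⟨u, hu⟩

theorem gronwall_measure_uniqueness_general (ξ : Measure ℝ) [IsLocallyFiniteMeasure ξ]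
    (t K : ℝ) (hK : 0 ≤ K) (δ : ℝ → ℝ)
    (hnn : ∀ u ∈ Set.Icc (0:ℝ) t, 0 ≤ δ u)
    (hbdd : ∃ C, ∀ u ∈ Set.Icc (0:ℝ) t, δ u ≤ C)
    (hineq : ∀ u ∈ Set.Icc (0:ℝ) t, δ u ≤ K * ∫ x in Set.Ico (0:ℝ) u, δ x ∂ξ) :
    ∀ u ∈ Set.Icc (0:ℝ) t, δ u = 0 := by
  obtain ⟨C, hC⟩ := hbdd
  have hself (x : ℝ) (hx : x ∈ Icc 0 t) (hZ : Ico 0 x ⊆ {v | δ v = 0}) : δ x = 0 :=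
    le_antisymm (by simpa [setIntegral_eq_zero_of_forall_eq_zero hZ] using hineq x hx) (hnn x hx)
  have hstep (x : ℝ) (hx : x ∈ Ico 0 t) (hZ : Ico 0 x ⊆ {v | δ v = 0}) :
      ∃ y > x, Ico 0 y ⊆ {v | δ v = 0} := by
    have hIcc : Icc 0 x ⊆ {v | δ v = 0} := by
      rw [← Ico_insert_right hx.1]
      exact insert_subset (hself x (Ico_subset_Icc_self hx) hZ) hZ
    have hIoc : Ioc x t ⊆ Icc 0 t := Ioc_subset_Icc_self.trans (Icc_subset_Icc_left hx.1)
    obtain ⟨c, hxc, hc⟩ := exists_eqOn_zero_Ioc_of_le_mul_setIntegral_Ioo ξ hK hx.2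
      (fun u hu => hnn u (hIoc hu)) (fun u hu => hC u (hIoc hu)) fun u hu => by
        rw [← setIntegral_eq_of_subset_of_forall_sdiff_eq_zero measurableSet_Ico
          (Ioo_subset_Ico_self.trans (Ico_subset_Ico_left hx.1))
          fun v hv => hIcc ⟨hv.1.1, not_lt.1 fun hxv => hv.2 ⟨hxv, hv.1.2⟩⟩]
        exact hineq u (hIoc hu)
    refine ⟨c, hxc, fun v hv => ?_⟩
    rcases le_or_gt v x with hvx | hxv
    · exact hIcc ⟨hv.1, hvx⟩
    · exact hc ⟨hxv, hv.2.le⟩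
  exact fun u hu => hself u hu <|
    (Ico_subset_Ico_right hu.2).trans (Ico_subset_of_forall_exists_gt_Ico_subset hstep)

/-- Grönwall-type uniqueness: if `ξ` is a locally finite Borel measure, `δ` is a
bounded, nonnegative, measurable function on `[0,t]` satisfying
`δ(u) ≤ K ∫_{[0,u)} δ dξ` for all `u ∈ [0,t]`, then `δ ≡ 0` on `[0,t]`. -/
theorem gronwall_measure_uniqueness (ξ : Measure ℝ) [IsLocallyFiniteMeasure ξ]
    (t K : ℝ) (hK : 0 ≤ K) (δ : ℝ → ℝ) (hmeas : Measurable δ)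
    (hnn : ∀ u ∈ Set.Icc (0:ℝ) t, 0 ≤ δ u)
    (hbdd : ∃ C, ∀ u ∈ Set.Icc (0:ℝ) t, δ u ≤ C)
    (hineq : ∀ u ∈ Set.Icc (0:ℝ) t, δ u ≤ K * ∫ x in Set.Ico (0:ℝ) u, δ x ∂ξ) :
    ∀ u ∈ Set.Icc (0:ℝ) t, δ u = 0 :=
  gronwall_measure_uniqueness_general ξ t K hK δ hnn hbdd hineq
end
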